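/- arXiv:1704.08515 — 14 statements merged into one kernel-verified Lean document; each statement's English description precedes it below -/
import Mathlib

section
/- Let a, b, c, d be complex numbers and let S be the 4×4 complex matrix whose rows are (|a|²+|b|², conj(a)·c, a·conj(c), |c|²+|d|²+a·b·conj(d)+conj(a)·conj(b)·d), (conj(a), 0, conj(c), b·conj(d)), (a, c, 0, conj(b)·d), (1, 0, 0, 0). Then the characteristic polynomial of S (i.e. det(z·I − S) as a polynomial in z) equals z⁴ + p₁z³ + p₂z² + p₃z + p₄, where p₁ = −|a|² − |b|², p₂ = −2|c|² − |d|² − 2Re(a·b·conj(d)) − 2Re(a²·conj(c)), p₃ = −2Re(conj(a)·b·c·conj(d)) + |c|²(|b|² − |a|²), p₄ = |c|⁴ + |c|²|d|²; in particular all four coefficients p₁, p₂, p₃, p₄ are real. -/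
open Polynomial ComplexConjugate

/-! Expanding `det (X • 1 - S)` along the last row `(1, 0, 0, 0)` expresses the coefficients of the
characteristic polynomial through the ten free entries of `S` alone. After substituting them,
every coefficient is a combination of products `z * conj z = ‖z‖ ^ 2` and conjugate pairs
`z + conj z = 2 Re z`, hence real. -/

theorem Matrix.charpoly_fin_four_of_sparse {R : Type*} [CommRing R]
    (s₀₀ s₀₁ s₀₂ s₀₃ s₁₀ s₁₂ s₁₃ s₂₀ s₂₁ s₂₃ : R) :
    (!![s₀₀, s₀₁, s₀₂, s₀₃;
        s₁₀, 0, s₁₂, s₁₃;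
        s₂₀, s₂₁, 0, s₂₃;
        1, 0, 0, 0] : Matrix (Fin 4) (Fin 4) R).charpoly
      = X ^ 4 + C (-s₀₀) * X ^ 3 + C (-(s₀₁ * s₁₀ + s₀₂ * s₂₀ + s₁₂ * s₂₁ + s₀₃)) * X ^ 2
        + C (s₀₀ * s₁₂ * s₂₁ - s₀₁ * s₁₂ * s₂₀ - s₀₂ * s₁₀ * s₂₁ - s₀₁ * s₁₃ - s₀₂ * s₂₃) * X
        + C (s₀₃ * s₁₂ * s₂₁ - s₀₁ * s₁₂ * s₂₃ - s₀₂ * s₁₃ * s₂₁) := by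
  rw [Matrix.charpoly, Matrix.det_succ_row _ 3]
  simp only [Fin.sum_univ_four, Matrix.det_fin_three]
  simp [Matrix.submatrix_apply, Fin.succAbove, Fin.ext_iff]
  ring

/-- The characteristic polynomial of the mean-square stability matrix `S` of the
two-step stochastic linear difference equation
`X_i = a X_{i-1} + c X_{i-2} + b X_{i-1} ξ_{i-1} + d X_{i-2} ξ_{i-2}`
is `z⁴ + p₁ z³ + p₂ z² + p₃ z + p₄` with the real coefficients `p₁, p₂, p₃, p₄`. -/
theorem stmt_0 (a b c d : ℂ)
    (S : Matrix (Fin 4) (Fin 4) ℂ)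
    (hS : S = !![(‖a‖ ^ 2 + ‖b‖ ^ 2 : ℂ), conj a * c, a * conj c,
                   (‖c‖ ^ 2 + ‖d‖ ^ 2 : ℂ) + a * b * conj d + conj a * conj b * d;
                 conj a, 0, conj c, b * conj d;
                 a, c, 0, conj b * d;
                 1, 0, 0, 0])
    (p₁ p₂ p₃ p₄ : ℝ)
    (hp₁ : p₁ = -‖a‖ ^ 2 - ‖b‖ ^ 2)
    (hp₂ : p₂ = -2 * ‖c‖ ^ 2 - ‖d‖ ^ 2
        - 2 * (a * b * conj d).re - 2 * (a ^ 2 * conj c).re)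
    (hp₃ : p₃ = -2 * (conj a * b * c * conj d).re
        + ‖c‖ ^ 2 * (‖b‖ ^ 2 - ‖a‖ ^ 2))
    (hp₄ : p₄ = ‖c‖ ^ 4 + ‖c‖ ^ 2 * ‖d‖ ^ 2) :
    S.charpoly = X ^ 4 + C (p₁ : ℂ) * X ^ 3 + C (p₂ : ℂ) * X ^ 2
      + C (p₃ : ℂ) * X + C (p₄ : ℂ) := by
  have norm_pow_four (z : ℂ) : (‖z‖ : ℂ) ^ 4 = (z * conj z) ^ 2 := by
    rw [Complex.mul_conj']; ring
  rw [hS, Matrix.charpoly_fin_four_of_sparse]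
  subst hp₁ hp₂ hp₃ hp₄
  push_cast
  simp only [norm_pow_four, Complex.re_eq_add_conj, ← Complex.mul_conj', map_mul, map_pow,
    Complex.conj_conj]
  congrm X ^ 4 + C ?_ * X ^ 3 + C ?_ * X ^ 2 + C ?_ * X + C ?_ <;> ring
end

section
/- Let a, b, c, d be complex numbers with a ≠ 0 and b ≠ 0, and assume |c|² + |d|² < 1. Define p₁ = −(|a|²+|b|²) and p₃ = −2Re(conj(a)·b·c·conj(d)) + |c|²(|b|²−|a|²). Then |p₃| < −p₁, i.e. |−2Re(conj(a)·b·c·conj(d)) + |c|²(|b|²−|a|²)| < |a|² + |b|². -/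
open ComplexConjugate

/-!
Write `A, B, C, D` for the moduli of `a, b, c, d`. Since `|Re(conj a · b · c · conj d)| ≤ ABCD`,
`|p₃| ≤ 2AB · CD + |B² - A²| · C²`. By Cauchy–Schwarz in the plane this is at most
`√((2AB)² + (B² - A²)²) · √(C²D² + C⁴) = (A² + B²) · C · √(C² + D²)`,
and `C² (C² + D²) ≤ (C² + D²)² < 1`.
-/

lemma mul_add_mul_sq_le_sq_add_sq_mul (p q x y : ℝ) :
    (p * x + q * y) ^ 2 ≤ (p ^ 2 + q ^ 2) * (x ^ 2 + y ^ 2) := by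
  nlinarith [sq_nonneg (p * y - q * x)]

lemma abs_neg_two_mul_add_sq_mul_sub_lt {A B C D r : ℝ} (hAB : 0 < A ^ 2 + B ^ 2)
    (hCD : C ^ 2 + D ^ 2 < 1) (hr : |r| ≤ A * B * C * D) :
    |-2 * r + C ^ 2 * (B ^ 2 - A ^ 2)| < A ^ 2 + B ^ 2 := by
  have hC_lt : C ^ 2 * (C ^ 2 + D ^ 2) < 1 := by
    nlinarith [sq_nonneg D, sq_nonneg (C ^ 2 + D ^ 2)]
  have hLagrange : (2 * A * B) ^ 2 + |B ^ 2 - A ^ 2| ^ 2 = (A ^ 2 + B ^ 2) ^ 2 := by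
    rw [sq_abs]; ring
  have hsq : (2 * A * B * (C * D) + |B ^ 2 - A ^ 2| * C ^ 2) ^ 2 < (A ^ 2 + B ^ 2) ^ 2 :=
    calc (2 * A * B * (C * D) + |B ^ 2 - A ^ 2| * C ^ 2) ^ 2
        ≤ ((2 * A * B) ^ 2 + |B ^ 2 - A ^ 2| ^ 2) * ((C * D) ^ 2 + (C ^ 2) ^ 2) :=
          mul_add_mul_sq_le_sq_add_sq_mul _ _ _ _
      _ = (A ^ 2 + B ^ 2) ^ 2 * (C ^ 2 * (C ^ 2 + D ^ 2)) := by rw [hLagrange]; ring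
      _ < (A ^ 2 + B ^ 2) ^ 2 := mul_lt_of_lt_one_right (by positivity) hC_lt
  calc |-2 * r + C ^ 2 * (B ^ 2 - A ^ 2)|
      ≤ 2 * |r| + C ^ 2 * |B ^ 2 - A ^ 2| := by
        refine (abs_add_le _ _).trans_eq ?_
        rw [abs_mul, abs_mul, abs_sq]; norm_num
    _ ≤ 2 * A * B * (C * D) + |B ^ 2 - A ^ 2| * C ^ 2 := by nlinarith
    _ < A ^ 2 + B ^ 2 := lt_of_pow_lt_pow_left₀ 2 hAB.le hsq

theorem stmt_3_general (a b c d : ℂ) (ha : a ≠ 0)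
    (hcd : ‖c‖ ^ 2 + ‖d‖ ^ 2 < 1)
    (p₁ p₃ : ℝ)
    (hp₁ : p₁ = -(‖a‖ ^ 2 + ‖b‖ ^ 2))
    (hp₃ : p₃ = -2 * (conj a * b * c * conj d).re
        + ‖c‖ ^ 2 * (‖b‖ ^ 2 - ‖a‖ ^ 2)) :
    |p₃| < -p₁ := by
  have hab : 0 < ‖a‖ ^ 2 + ‖b‖ ^ 2 := by
    have := norm_pos_iff.mpr ha
    positivity
  have hre : |(conj a * b * c * conj d).re| ≤ ‖a‖ * ‖b‖ * ‖c‖ * ‖d‖ := by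
    simpa using Complex.abs_re_le_norm (conj a * b * c * conj d)
  rw [hp₁, hp₃, neg_neg]
  exact abs_neg_two_mul_add_sq_mul_sub_lt hab hcd hre

/-- If `a ≠ 0`, `b ≠ 0` and `|c|² + |d|² < 1`, then `|p₃| < -p₁`. -/
theorem stmt_3 (a b c d : ℂ) (ha : a ≠ 0) (hb : b ≠ 0)
    (hcd : ‖c‖ ^ 2 + ‖d‖ ^ 2 < 1)
    (p₁ p₃ : ℝ)
    (hp₁ : p₁ = -(‖a‖ ^ 2 + ‖b‖ ^ 2))
    (hp₃ : p₃ = -2 * (conj a * b * c * conj d).re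
        + ‖c‖ ^ 2 * (‖b‖ ^ 2 - ‖a‖ ^ 2)) :
    |p₃| < -p₁ :=
  stmt_3_general a b c d ha hcd p₁ p₃ hp₁ hp₃
end

section
/- Let a, b, c, d be complex numbers and define p₁ = −(|a|²+|b|²), p₂ = −2|c|² − |d|² − 2Re(a·b·conj(d)) − 2Re(a²·conj(c)), p₃ = −2Re(conj(a)·b·c·conj(d)) + |c|²(|b|²−|a|²), p₄ = |c|²(|c|²+|d|²). Assume: (B) |a|²(1+|c|²) + |b|²(1−|c|²) + 2Re(conj(a)·b·c·conj(d)) < (1−|c|²)² − (1−|c|²)|d|² − 2Re(a·b·conj(d)) − 2Re(a²·conj(c)); (D) |c|² + |d|² < 1; (E) Re(a·b·conj(d)) + Re(conj(a)·b·c·conj(d)) ≥ 0 and Re(a²·conj(c)) ≥ −|a|²|c|². Then p₂ + p₃ − p₁ + 3p₄ < 1. -/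
open ComplexConjugate

/-!
Write `A, B, C, D` for `‖a‖², ‖b‖², ‖c‖², ‖d‖²`, and let `S ≥ 0` and `T ≥ 0` be the two quantities of
condition (E). In these variables (B) says that `gap := (1 - C)(1 - C - D) - (1 - C)(A + B) - 2(S + T)`
is positive, and the claim is `G < 0` for `G := p₂ + p₃ - p₁ + 3 p₄ - 1`. The identity
`(1 - C) G + (1 + C) gap = -2 (1 - C)² (C + D) - 4 (S + T)` makes `(1 - C) G` negative, and `C < 1` by (D).
-/

theorem add_mul_add_sub_lt_one_of_lt {A B C D S T : ℝ} (hC : 0 ≤ C) (hD : 0 ≤ D)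
    (hCD : C + D < 1) (hS : 0 ≤ S) (hT : 0 ≤ T)
    (hgap : (1 - C) * (A + B) + 2 * (S + T) < (1 - C) * (1 - C - D)) :
    (1 + C) * (A + B) + 3 * C * (C + D) - 2 * C - D - 2 * (S + T) < 1 := by
  have hC₁ : 0 < 1 - C := by linarith
  have hG : (1 - C) * ((1 + C) * (A + B) + 3 * C * (C + D) - 2 * C - D - 2 * (S + T) - 1) < 0 := by
    linarith [mul_pos (by linarith : (0 : ℝ) < 1 + C) (sub_pos.2 hgap),
      mul_nonneg (sq_nonneg (1 - C)) (add_nonneg hC hD)]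
  linarith [neg_of_mul_neg_right hG hC₁.le]

/-- Under conditions (B), (D), (E): `p₂ + p₃ - p₁ + 3 p₄ < 1`. -/
theorem stmt_5 (a b c d : ℂ)
    (p₁ p₂ p₃ p₄ : ℝ)
    (hp₁ : p₁ = -(‖a‖ ^ 2 + ‖b‖ ^ 2))
    (hp₂ : p₂ = -2 * ‖c‖ ^ 2 - ‖d‖ ^ 2
        - 2 * (a * b * conj d).re - 2 * (a ^ 2 * conj c).re)
    (hp₃ : p₃ = -2 * (conj a * b * c * conj d).re
        + ‖c‖ ^ 2 * (‖b‖ ^ 2 - ‖a‖ ^ 2))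
    (hp₄ : p₄ = ‖c‖ ^ 2 * (‖c‖ ^ 2 + ‖d‖ ^ 2))
    (hB : ‖a‖ ^ 2 * (1 + ‖c‖ ^ 2)
        + ‖b‖ ^ 2 * (1 - ‖c‖ ^ 2)
        + 2 * (conj a * b * c * conj d).re
        < (1 - ‖c‖ ^ 2) ^ 2 - (1 - ‖c‖ ^ 2) * ‖d‖ ^ 2
          - 2 * (a * b * conj d).re - 2 * (a ^ 2 * conj c).re)
    (hD : ‖c‖ ^ 2 + ‖d‖ ^ 2 < 1)
    (hE₁ : 0 ≤ (a * b * conj d).re + (conj a * b * c * conj d).re)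
    (hE₂ : (a ^ 2 * conj c).re ≥ -(‖a‖ ^ 2 * ‖c‖ ^ 2)) :
    p₂ + p₃ - p₁ + 3 * p₄ < 1 := by
  subst hp₁ hp₂ hp₃ hp₄
  have hT : 0 ≤ (a ^ 2 * conj c).re + ‖a‖ ^ 2 * ‖c‖ ^ 2 := by linarith
  have key := add_mul_add_sub_lt_one_of_lt (A := ‖a‖ ^ 2) (B := ‖b‖ ^ 2) (by positivity)
    (by positivity) hD hE₁ hT (by linear_combination hB)
  linear_combination key
end

section
/- Let a, b, c, d be complex numbers with a ≠ 0 and b ≠ 0, and define p₁ = −(|a|²+|b|²), p₃ = −2Re(conj(a)·b·c·conj(d)) + |c|²(|b|²−|a|²), p₄ = |c|²(|c|²+|d|²). Assume: (B) |a|²(1+|c|²) + |b|²(1−|c|²) + 2Re(conj(a)·b·c·conj(d)) < (1−|c|²)² − (1−|c|²)|d|² − 2Re(a·b·conj(d)) − 2Re(a²·conj(c)); (D) |c|² + |d|² < 1; (E) Re(a·b·conj(d)) + Re(conj(a)·b·c·conj(d)) ≥ 0 and Re(a²·conj(c)) ≥ −|a|²|c|². Then |p₃ − p₄p₁| < 1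 − p₄². -/
/-!
Write `s = |a|² + |b|²` and `t = |c|² + |d|²`. Condition (E) turns (B) into
`(1 - |c|²) s < (1 - |c|²)(1 - t)`, so `s < 1 - t` by (D). Since
`|Re(conj a · b · c · conj d)| ≤ |a||b||c||d|`, Cauchy–Schwarz gives `|p₃| ≤ s t`, and
`0 ≤ p₄ ≤ t`. Hence `|p₃ - p₄ p₁| ≤ 2 s t ≤ 2 t (1 - t) < 1 - t² ≤ 1 - p₄²`.
-/

open ComplexConjugate

lemma abs_re_conj_mul_mul_mul_conj_le (a b c d : ℂ) :
    |(conj a * b * c * conj d).re| ≤ ‖a‖ * ‖b‖ * ‖c‖ * ‖d‖ := by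
  simpa [Complex.norm_conj] using Complex.abs_re_le_norm (conj a * b * c * conj d)

lemma abs_neg_two_mul_add_sq_mul_sub_le {x y z w r : ℝ} (hr : |r| ≤ x * y * z * w) :
    |-2 * r + z ^ 2 * (y ^ 2 - x ^ 2)| ≤ (x ^ 2 + y ^ 2) * (z ^ 2 + w ^ 2) := by
  rw [abs_le] at hr ⊢
  constructor
  · nlinarith [sq_nonneg (y * z), sq_nonneg (y * z - x * w), sq_nonneg (y * w)]
  · nlinarith [sq_nonneg (x * z), sq_nonneg (x * z - y * w), sq_nonneg (x * w)]

lemma abs_add_mul_lt_one_sub_sq {s t p₃ p₄ : ℝ} (hs : 0 ≤ s) (ht : t < 1) (hst : s ≤ 1 - t)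
    (hp₃ : |p₃| ≤ s * t) (hp₄ : 0 ≤ p₄) (hp₄t : p₄ ≤ t) :
    |p₃ + p₄ * s| < 1 - p₄ ^ 2 := by
  have ht₀ : 0 ≤ t := hp₄.trans hp₄t
  calc |p₃ + p₄ * s| ≤ |p₃| + p₄ * s := by
        simpa [abs_of_nonneg (mul_nonneg hp₄ hs)] using abs_add_le p₃ (p₄ * s)
    _ ≤ 2 * t * s := by nlinarith
    _ ≤ 2 * t * (1 - t) := by gcongr
    _ < (1 + t) * (1 - t) := by nlinarith
    _ ≤ 1 - p₄ ^ 2 := by nlinarith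

lemma norm_sq_add_norm_sq_lt_one_sub {a b c d : ℂ}
    (hB : ‖a‖ ^ 2 * (1 + ‖c‖ ^ 2) + ‖b‖ ^ 2 * (1 - ‖c‖ ^ 2) + 2 * (conj a * b * c * conj d).re
        < (1 - ‖c‖ ^ 2) ^ 2 - (1 - ‖c‖ ^ 2) * ‖d‖ ^ 2
          - 2 * (a * b * conj d).re - 2 * (a ^ 2 * conj c).re)
    (hD : ‖c‖ ^ 2 + ‖d‖ ^ 2 < 1)
    (hE₁ : 0 ≤ (a * b * conj d).re + (conj a * b * c * conj d).re)
    (hE₂ : (a ^ 2 * conj c).re ≥ -(‖a‖ ^ 2 * ‖c‖ ^ 2)) :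
    ‖a‖ ^ 2 + ‖b‖ ^ 2 < 1 - (‖c‖ ^ 2 + ‖d‖ ^ 2) := by
  have hc : 0 < 1 - ‖c‖ ^ 2 := by nlinarith [sq_nonneg ‖d‖]
  refine lt_of_mul_lt_mul_left ?_ hc.le
  linarith

theorem stmt_6_general (a b c d : ℂ)
    (p₁ p₃ p₄ : ℝ)
    (hp₁ : p₁ = -(‖a‖ ^ 2 + ‖b‖ ^ 2))
    (hp₃ : p₃ = -2 * (conj a * b * c * conj d).re
        + ‖c‖ ^ 2 * (‖b‖ ^ 2 - ‖a‖ ^ 2))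
    (hp₄ : p₄ = ‖c‖ ^ 2 * (‖c‖ ^ 2 + ‖d‖ ^ 2))
    (hB : ‖a‖ ^ 2 * (1 + ‖c‖ ^ 2)
        + ‖b‖ ^ 2 * (1 - ‖c‖ ^ 2)
        + 2 * (conj a * b * c * conj d).re
        < (1 - ‖c‖ ^ 2) ^ 2 - (1 - ‖c‖ ^ 2) * ‖d‖ ^ 2
          - 2 * (a * b * conj d).re - 2 * (a ^ 2 * conj c).re)
    (hD : ‖c‖ ^ 2 + ‖d‖ ^ 2 < 1)
    (hE₁ : 0 ≤ (a * b * conj d).re + (conj a * b * c * conj d).re)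
    (hE₂ : (a ^ 2 * conj c).re ≥ -(‖a‖ ^ 2 * ‖c‖ ^ 2)) :
    |p₃ - p₄ * p₁| < 1 - p₄ ^ 2 := by
  have hp₃_le : |p₃| ≤ (‖a‖ ^ 2 + ‖b‖ ^ 2) * (‖c‖ ^ 2 + ‖d‖ ^ 2) :=
    hp₃ ▸ abs_neg_two_mul_add_sq_mul_sub_le (abs_re_conj_mul_mul_mul_conj_le a b c d)
  have hp₄_le : p₄ ≤ ‖c‖ ^ 2 + ‖d‖ ^ 2 := by
    rw [hp₄]
    exact mul_le_of_le_one_left (by positivity) (by nlinarith [sq_nonneg ‖d‖])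
  rw [hp₁, mul_neg, sub_neg_eq_add]
  exact abs_add_mul_lt_one_sub_sq (by positivity) hD
    (norm_sq_add_norm_sq_lt_one_sub hB hD hE₁ hE₂).le hp₃_le (hp₄ ▸ by positivity) hp₄_le

/-- Under conditions (B), (D), (E), with `a ≠ 0`, `b ≠ 0`: `|p₃ - p₄ p₁| < 1 - p₄²`. -/
theorem stmt_6 (a b c d : ℂ) (ha : a ≠ 0) (hb : b ≠ 0)
    (p₁ p₃ p₄ : ℝ)
    (hp₁ : p₁ = -(‖a‖ ^ 2 + ‖b‖ ^ 2))
    (hp₃ : p₃ = -2 * (conj a * b * c * conj d).re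
        + ‖c‖ ^ 2 * (‖b‖ ^ 2 - ‖a‖ ^ 2))
    (hp₄ : p₄ = ‖c‖ ^ 2 * (‖c‖ ^ 2 + ‖d‖ ^ 2))
    (hB : ‖a‖ ^ 2 * (1 + ‖c‖ ^ 2)
        + ‖b‖ ^ 2 * (1 - ‖c‖ ^ 2)
        + 2 * (conj a * b * c * conj d).re
        < (1 - ‖c‖ ^ 2) ^ 2 - (1 - ‖c‖ ^ 2) * ‖d‖ ^ 2
          - 2 * (a * b * conj d).re - 2 * (a ^ 2 * conj c).re)
    (hD : ‖c‖ ^ 2 + ‖d‖ ^ 2 < 1)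
    (hE₁ : 0 ≤ (a * b * conj d).re + (conj a * b * c * conj d).re)
    (hE₂ : (a ^ 2 * conj c).re ≥ -(‖a‖ ^ 2 * ‖c‖ ^ 2)) :
    |p₃ - p₄ * p₁| < 1 - p₄ ^ 2 :=
  stmt_6_general a b c d p₁ p₃ p₄ hp₁ hp₃ hp₄ hB hD hE₁ hE₂
end

section
/- Let a, b, c be complex numbers satisfying: |c| < 1; |a|²(1+|c|²) + 2Re(a²·conj(c)) < (1−|c|²)²; |b|² < 1 − |c|² − |a|²(1+|c|²)/(1−|c|²) − 2Re(a²·conj(c))/(1−|c|²); and Re(a²·conj(c)) ≥ −|a|²|c|². Then every complex root of the polynomial z⁴ + p₁z³ + p₂z² + p₃z + p₄, where p₁ = −(|a|²+|b|²), p₂ = −2|c|² − 2Re(a²·conj(c)), p₃ = |c|²(|b|²−|a|²), p₄ = |c|⁴, has modulus strictly less than 1. -/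
open ComplexConjugate

/-!
Write `A = ‖a‖²`, `B = ‖b‖²`, `C = ‖c‖²`, `R = Re (a² c̄)`. For `z ≠ 0` the quartic is
`z² ((z - C/z)² - A (z + C/z) - B (z - C/z) - 2R)`. If `z = tω` with `t ≥ 1` and `‖ω‖ = 1`,
`ω = ξ + iη`, then `z + C/z = Pξ + iQη` and `z - C/z = Qξ + iPη` with `P = t + C/t`, `Q = t - C/t`,
so `P² - Q² = 4C`, `Q ≥ 1 - C` and `P - Q ≤ 2C`. The imaginary part of the second factor vanishes
only if `η = 0` or `2PQξ = AQ + BP`, and in each of the three resulting cases (`ξ = 1`, `ξ = -1`,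
non-real) the real part is nonzero. The tightest case is `ξ = 1`, `t = 1`, where nonvanishing is
exactly the hypothesis on `‖b‖²`.
-/

theorem Complex.ofReal_div_ofReal_mul {ω : ℂ} (hω : ‖ω‖ = 1) (r t : ℝ) :
    (r : ℂ) / (t * ω) = ((r / t : ℝ) : ℂ) * conj ω := by
  rw [div_eq_mul_inv, mul_inv, Complex.inv_eq_conj hω]
  push_cast
  ring

namespace AdamsQuartic

def reducedQuartic {K : Type*} [Field K] (A B C R z : K) : K :=
  (z - C / z) ^ 2 - A * (z + C / z) - B * (z - C / z) - 2 * R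

theorem quartic_eq_sq_mul_reducedQuartic {K : Type*} [Field K] (A B C R : K) {z : K}
    (hz : z ≠ 0) :
    z ^ 4 - (A + B) * z ^ 3 - (2 * C + 2 * R) * z ^ 2 + C * (B - A) * z + C ^ 2
      = z ^ 2 * reducedQuartic A B C R z := by
  rw [reducedQuartic]
  field_simp
  ring

theorem two_mul_lt_sq_add {A B C R P Q : ℝ} (hA : 0 ≤ A) (hB : 0 ≤ B) (hP : 0 ≤ P)
    (hQ : 0 < Q) (hPC : 4 * C ≤ P ^ 2) (hR : R ^ 2 ≤ A ^ 2 * C) :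
    2 * R < Q ^ 2 + A * P + B * Q := by
  have hRP : 2 * R ≤ A * P := by
    refine (abs_le_of_sq_le_sq' ?_ (by positivity)).2
    nlinarith [sq_nonneg A]
  nlinarith [mul_nonneg hB hQ.le]

theorem two_mul_lt_sq_sub {A B C R P Q : ℝ} (hA : 0 ≤ A) (hB : 0 ≤ B) (hAB : A + B < 1 - C)
    (hQ : 1 - C ≤ Q) (hPQ : P ≤ Q + 2 * C)
    (hmain : A * (1 + C) + 2 * R + B * (1 - C) < (1 - C) ^ 2) :
    2 * R < Q ^ 2 - A * P - B * Q := by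
  -- `hmain` is the case `Q = 1 - C`, `P = 1 + C`; the excess over it factors as below.
  nlinarith [mul_nonneg (sub_nonneg.2 hQ) (by linarith : 0 ≤ Q + (1 - C) - A - B),
    mul_le_mul_of_nonneg_left hPQ hA]

theorem re_neg_of_two_mul_mul_eq {A B C R P Q ξ : ℝ} (hA1 : A ≤ 1) (hB : 0 ≤ B)
    (hBQ : B ≤ Q) (hC : 0 ≤ C) (hR : -(A * C) ≤ R) (hP : 0 < P) (hQ : 0 < Q)
    (hPQ : P ^ 2 = Q ^ 2 + 4 * C) (hξ : 2 * P * Q * ξ = A * Q + B * P) :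
    Q ^ 2 * ξ ^ 2 - P ^ 2 * (1 - ξ ^ 2) - (A * P + B * Q) * ξ - 2 * R < 0 := by
  -- Substituting `ξ = (AQ + BP) / (2PQ)`, the terms in `ξ` collapse to `C (B²/Q² - A²/P²)`.
  have hξ_elim : 4 * P ^ 2 * Q ^ 2
      * (Q ^ 2 * ξ ^ 2 - P ^ 2 * (1 - ξ ^ 2) - (A * P + B * Q) * ξ - 2 * R)
      = 4 * C * (B ^ 2 * P ^ 2 - A ^ 2 * Q ^ 2) - 4 * P ^ 2 * Q ^ 2 * (P ^ 2 + 2 * R) := by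
    linear_combination
      ((P ^ 2 + Q ^ 2) * (2 * P * Q * ξ + A * Q + B * P) - 2 * P * Q * (A * P + B * Q)) * hξ
      + (A * Q + B * P) * (B * P - A * Q) * hPQ
  have hB2 : B ^ 2 ≤ Q ^ 2 := pow_le_pow_left₀ hB hBQ 2
  have hneg : C - P ^ 2 - 2 * R < 0 := by nlinarith
  refine neg_of_mul_neg_right (a := 4 * P ^ 2 * Q ^ 2) ?_ (by positivity)
  rw [hξ_elim]
  nlinarith [mul_le_mul_of_nonneg_left hB2 (by positivity : 0 ≤ 4 * C * P ^ 2),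
    mul_neg_of_pos_of_neg (by positivity : 0 < 4 * P ^ 2 * Q ^ 2) hneg,
    mul_nonneg (mul_nonneg hC (sq_nonneg A)) (sq_nonneg Q)]

theorem reducedQuartic_ofReal_mul_ne_zero {A B C R t : ℝ} {ω : ℂ} (hA : 0 ≤ A) (hB : 0 ≤ B)
    (hC : 0 ≤ C) (hAB : A + B < 1 - C) (hRlo : -(A * C) ≤ R) (hRsq : R ^ 2 ≤ A ^ 2 * C)
    (hmain : A * (1 + C) + 2 * R + B * (1 - C) < (1 - C) ^ 2) (ht : 1 ≤ t) (hω : ‖ω‖ = 1) :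
    reducedQuartic (A : ℂ) B C R (t * ω) ≠ 0 := by
  rw [reducedQuartic, Complex.ofReal_div_ofReal_mul hω]
  set s := C / t
  have hts : t * s = C := by simp only [s]; field_simp
  have hs0 : 0 ≤ s := by positivity
  have hsC : s ≤ C := by nlinarith
  have hξη : ω.re ^ 2 + ω.im ^ 2 = 1 := by
    have := Complex.sq_norm ω
    rw [hω, Complex.normSq_apply] at this
    linarith
  have hu : (t : ℂ) * ω + s * conj ω = ⟨(t + s) * ω.re, (t - s) * ω.im⟩ := by
    apply Complex.ext <;> simp <;> ring
  have hv : (t : ℂ) * ω - s * conj ω = ⟨(t - s) * ω.re, (t + s) * ω.im⟩ := by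
    apply Complex.ext <;> simp <;> ring
  rw [hu, hv]
  set P := t + s
  set Q := t - s
  have hQC : 1 - C ≤ Q := by linarith
  have hQ : 0 < Q := by linarith
  have hPQ : P ^ 2 = Q ^ 2 + 4 * C := by rw [← hts]; ring
  intro h
  have hre := congrArg Complex.re h
  have him := congrArg Complex.im h
  simp only [pow_two, Complex.sub_re, Complex.sub_im, Complex.mul_re, Complex.mul_im,
    Complex.ofReal_re, Complex.ofReal_im, Complex.re_ofNat, Complex.im_ofNat, zero_mul, mul_zero,
    sub_zero, add_zero, Complex.zero_re, Complex.zero_im] at hre him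
  rcases eq_or_ne ω.im 0 with him0 | him0
  · have hξ : ω.re ^ 2 = 1 ^ 2 := by rw [him0] at hξη; linarith
    rcases eq_or_eq_neg_of_sq_eq_sq _ _ hξ with hξ1 | hξ1 <;> rw [him0, hξ1] at hre
    · have := two_mul_lt_sq_sub (P := P) hA hB hAB hQC (by linarith) hmain
      linarith
    · have := two_mul_lt_sq_add (P := P) hA hB (by positivity) hQ (by nlinarith) hRsq
      linarith
  · have hξ : 2 * P * Q * ω.re = A * Q + B * P :=
      mul_left_cancel₀ him0 (by linear_combination him)
    have := re_neg_of_two_mul_mul_eq (by linarith) hB (by linarith) hC hRlo (by linarith) hQ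
      hPQ hξ
    nlinarith

end AdamsQuartic

theorem stmt_7_general (a b c : ℂ)
    (h₁ : ‖c‖ < 1)
    (h₃ : ‖b‖ ^ 2
        < 1 - ‖c‖ ^ 2
          - ‖a‖ ^ 2 * (1 + ‖c‖ ^ 2) / (1 - ‖c‖ ^ 2)
          - 2 * (a ^ 2 * conj c).re / (1 - ‖c‖ ^ 2))
    (h₄ : (a ^ 2 * conj c).re ≥ -(‖a‖ ^ 2 * ‖c‖ ^ 2))
    (p₁ p₂ p₃ p₄ : ℝ)
    (hp₁ : p₁ = -(‖a‖ ^ 2 + ‖b‖ ^ 2))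
    (hp₂ : p₂ = -2 * ‖c‖ ^ 2 - 2 * (a ^ 2 * conj c).re)
    (hp₃ : p₃ = ‖c‖ ^ 2 * (‖b‖ ^ 2 - ‖a‖ ^ 2))
    (hp₄ : p₄ = ‖c‖ ^ 4) :
    ∀ z : ℂ, z ^ 4 + (p₁ : ℂ) * z ^ 3 + (p₂ : ℂ) * z ^ 2 + (p₃ : ℂ) * z + (p₄ : ℂ) = 0 →
      ‖z‖ < 1 := by
  intro z hz
  by_contra! hz1
  set A := ‖a‖ ^ 2
  set B := ‖b‖ ^ 2
  set C := ‖c‖ ^ 2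
  set R := (a ^ 2 * conj c).re
  have hC1 : 0 < 1 - C := by simp only [C]; nlinarith [norm_nonneg c]
  have hmain : A * (1 + C) + 2 * R + B * (1 - C) < (1 - C) ^ 2 := by
    have := mul_lt_mul_of_pos_right h₃ hC1
    field_simp at this
    linarith
  have hRsq : R ^ 2 ≤ A ^ 2 * C := by
    have hR := Complex.abs_re_le_norm (a ^ 2 * conj c)
    rw [norm_mul, norm_pow, Complex.norm_conj] at hR
    calc R ^ 2 = |R| ^ 2 := (sq_abs R).symm
      _ ≤ (A * ‖c‖) ^ 2 := by gcongr
      _ = A ^ 2 * C := by ring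
  have hAB : A + B < 1 - C := by nlinarith
  have hz0 : z ≠ 0 := by rintro rfl; norm_num at hz1
  have hzω : z = ‖z‖ * (z / ‖z‖) := (mul_div_cancel₀ z (by simp [hz0])).symm
  have hq : z ^ 4 - ((A : ℂ) + B) * z ^ 3 - (2 * (C : ℂ) + 2 * R) * z ^ 2
      + C * (B - A) * z + (C : ℂ) ^ 2 = 0 := by
    rw [hp₁, hp₂, hp₃, hp₄] at hz
    push_cast [A, B, C] at hz ⊢
    linear_combination hz
  rw [AdamsQuartic.quartic_eq_sq_mul_reducedQuartic _ _ _ _ hz0, mul_eq_zero,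
    or_iff_right (pow_ne_zero 2 hz0), hzω] at hq
  exact AdamsQuartic.reducedQuartic_ofReal_mul_ne_zero (by positivity) (by positivity)
    (by positivity) hAB h₄ hRsq hmain hz1 (by simp [hz0]) hq

/-- Asymptotic mean-square stability of the Adams-type two-step schemes (`d = 0` case):
under the stated conditions all roots of the characteristic polynomial lie strictly
inside the unit disk. -/
theorem stmt_7 (a b c : ℂ)
    (h₁ : ‖c‖ < 1)
    (h₂ : ‖a‖ ^ 2 * (1 + ‖c‖ ^ 2) + 2 * (a ^ 2 * conj c).re
        < (1 - ‖c‖ ^ 2) ^ 2)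
    (h₃ : ‖b‖ ^ 2
        < 1 - ‖c‖ ^ 2
          - ‖a‖ ^ 2 * (1 + ‖c‖ ^ 2) / (1 - ‖c‖ ^ 2)
          - 2 * (a ^ 2 * conj c).re / (1 - ‖c‖ ^ 2))
    (h₄ : (a ^ 2 * conj c).re ≥ -(‖a‖ ^ 2 * ‖c‖ ^ 2))
    (p₁ p₂ p₃ p₄ : ℝ)
    (hp₁ : p₁ = -(‖a‖ ^ 2 + ‖b‖ ^ 2))
    (hp₂ : p₂ = -2 * ‖c‖ ^ 2 - 2 * (a ^ 2 * conj c).re)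
    (hp₃ : p₃ = ‖c‖ ^ 2 * (‖b‖ ^ 2 - ‖a‖ ^ 2))
    (hp₄ : p₄ = ‖c‖ ^ 4) :
    ∀ z : ℂ, z ^ 4 + (p₁ : ℂ) * z ^ 3 + (p₂ : ℂ) * z ^ 2 + (p₃ : ℂ) * z + (p₄ : ℂ) = 0 →
      ‖z‖ < 1 :=
  stmt_7_general a b c h₁ h₃ h₄ p₁ p₂ p₃ p₄ hp₁ hp₂ hp₃ hp₄
end

section
/- Let a, c, d be complex numbers satisfying: |c|² + |d|² < 1; |a|²(1+|c|²) + 2Re(a²·conj(c)) < (1−|c|²)² − (1−|c|²)|d|²; and Re(a²·conj(c)) ≥ −|a|²|c|². Then every complex root of the polynomial z⁴ + p₁z³ + p₂z² + p₃z + p₄, where p₁ = −|a|², p₂ = −2|c|² − |d|² − 2Re(a²·conj(c)), p₃ = −|a|²|c|², p₄ = |c|²(|c|²+|d|²), has modulus strictly less than 1. -/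
open ComplexConjugate

/-!
Put A = ‖a‖², C = ‖c‖², D = ‖d‖², R = Re(a² c̄), B = 2C + D + 2R and E = C(C + D), so that the
polynomial is P(z) = z⁴ − A z³ − B z² − AC z + E. The hypotheses give A < 1 − C − D and B ≥ 0.
Let P(z) = 0 with ρ = |z|² ≥ 1.

If z is not real, the imaginary part of z̄² P(z) = 0 yields 2 Re z (ρ² − E) = Aρ(ρ − C); as
ρ(ρ − C) ≤ ρ² − E, this forces 0 ≤ 2 Re z ≤ A < 1. The real part of z̄² P(z) = 0 reads
(2 (Re z)² − ρ)(ρ² + E) = Aρ² Re z + Bρ² + ACρ Re z, whose left side is then negative and right side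
nonnegative.

A real root x ≥ 1 is excluded by P(x) ≥ x² P(1) > 0, and a real root x ≤ −1 by
P(x) = (x² − 1)(x² − E) + (1 − C)(1 − C − D) x² + (−A x (x² + C) − 2R x²),
whose last summand is nonnegative because |R| ≤ A √C and 2 √C |x| ≤ x² + C.
-/

def charQuartic {K : Type*} [CommRing K] (A B C E z : K) : K :=
  z ^ 4 - A * z ^ 3 - B * z ^ 2 - A * C * z + E

section

variable {A B C E : ℝ}

lemma ofReal_charQuartic (x : ℝ) :
    ((charQuartic A B C E x : ℝ) : ℂ) = charQuartic (A : ℂ) B C E x := by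
  simp [charQuartic]

lemma charQuartic_pos_of_one_le (hA : A ≤ 2) (hC₀ : 0 ≤ C) (hC₁ : C ≤ 1) (hE : E ≤ C)
    (h₁ : 0 < charQuartic A B C E 1) {x : ℝ} (hx : 1 ≤ x) : 0 < charQuartic A B C E x := by
  have hxC : 0 ≤ x * (x - C) := by nlinarith
  have key : A * (x * (x - C)) ≤ (x + 1) * (x ^ 2 - E) := by nlinarith
  have hid : charQuartic A B C E x - x ^ 2 * charQuartic A B C E 1
      = (x - 1) * ((x + 1) * (x ^ 2 - E) - A * (x * (x - C))) := by
    simp only [charQuartic]; ring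
  have hx₁ : 0 < x ^ 2 * charQuartic A B C E 1 := mul_pos (by positivity) h₁
  nlinarith

lemma two_mul_mul_le (hA : 0 ≤ A) (hC : 0 ≤ C) {R : ℝ} (hR : R ^ 2 ≤ A ^ 2 * C) (t : ℝ) :
    2 * R * t ≤ A * (t ^ 2 + C) := by
  apply le_of_abs_le
  apply abs_le_of_sq_le_sq _ (by positivity)
  nlinarith [sq_nonneg (A * (t ^ 2 - C))]

lemma charQuartic_pos_of_le_neg_one {D R : ℝ} (hA : 0 ≤ A) (hC : 0 ≤ C) (hD : 0 ≤ D)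
    (hR : R ^ 2 ≤ A ^ 2 * C) (hCD : C + D < 1) {x : ℝ} (hx : x ≤ -1) :
    0 < charQuartic A (2 * C + D + 2 * R) C (C * (C + D)) x := by
  have hAM : 2 * R * x ^ 2 ≤ -A * x * (x ^ 2 + C) := by
    nlinarith [two_mul_mul_le hA hC hR (-x)]
  have hE : C * (C + D) ≤ x ^ 2 := by nlinarith
  have h₁ : 0 ≤ (x ^ 2 - 1) * (x ^ 2 - C * (C + D)) := mul_nonneg (by nlinarith) (by linarith)
  have h₂ : 0 < (1 - C) * (1 - C - D) * x ^ 2 :=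
    mul_pos (mul_pos (by linarith) (by linarith)) (by nlinarith)
  have hid : charQuartic A (2 * C + D + 2 * R) C (C * (C + D)) x
      = (x ^ 2 - 1) * (x ^ 2 - C * (C + D)) + (1 - C) * (1 - C - D) * x ^ 2
        + (-A * x * (x ^ 2 + C) - 2 * R * x ^ 2) := by
    simp only [charQuartic]; ring
  linarith

lemma re_conj_sq_mul_charQuartic (z : ℂ) :
    (conj z ^ 2 * charQuartic (A : ℂ) B C E z).re
      = (2 * z.re ^ 2 - Complex.normSq z) * (Complex.normSq z ^ 2 + E)
        - A * Complex.normSq z ^ 2 * z.re - B * Complex.normSq z ^ 2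
        - A * C * Complex.normSq z * z.re := by
  simp [charQuartic, Complex.normSq_apply, pow_succ]
  ring

lemma im_conj_sq_mul_charQuartic (z : ℂ) :
    (conj z ^ 2 * charQuartic (A : ℂ) B C E z).im
      = z.im * (2 * z.re * (Complex.normSq z ^ 2 - E)
        - A * Complex.normSq z * (Complex.normSq z - C)) := by
  simp [charQuartic, Complex.normSq_apply, pow_succ]
  ring

lemma im_eq_zero_of_charQuartic_eq_zero (hA₀ : 0 ≤ A) (hA₁ : A < 1) (hB : 0 ≤ B) (hC : 0 ≤ C)
    (hE₀ : 0 ≤ E) (hEC : E ≤ C) (hC₁ : C < 1) {z : ℂ} (hz : 1 ≤ ‖z‖)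
    (h : charQuartic (A : ℂ) B C E z = 0) : z.im = 0 := by
  set ρ := Complex.normSq z with hρ
  set x := z.re
  have hρ₁ : 1 ≤ ρ := by rw [hρ, Complex.normSq_eq_norm_sq]; nlinarith
  have hre := re_conj_sq_mul_charQuartic (A := A) (B := B) (C := C) (E := E) z
  have him := im_conj_sq_mul_charQuartic (A := A) (B := B) (C := C) (E := E) z
  rw [h, mul_zero, Complex.zero_re] at hre
  rw [h, mul_zero, Complex.zero_im] at him
  by_contra hy
  have hI : 2 * x * (ρ ^ 2 - E) = A * (ρ * (ρ - C)) := by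
    have := (mul_eq_zero.mp him.symm).resolve_left hy
    linarith
  have hρC : 0 < ρ * (ρ - C) := mul_pos (by linarith) (by linarith)
  have hρE : ρ * (ρ - C) ≤ ρ ^ 2 - E := by nlinarith
  have hx₀ : 0 ≤ x := by
    by_contra! hx
    nlinarith [mul_nonneg hA₀ hρC.le]
  have hx₁ : 2 * x ≤ A := by
    by_contra! hx
    nlinarith [mul_le_mul_of_nonneg_left hρE hA₀]
  have hlhs : (2 * x ^ 2 - ρ) * (ρ ^ 2 + E) < 0 :=
    mul_neg_of_neg_of_pos (by nlinarith) (by positivity)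
  have hrhs : 0 ≤ A * ρ ^ 2 * x + B * ρ ^ 2 + A * C * ρ * x := by positivity
  linarith

lemma norm_lt_one_of_charQuartic_eq_zero {D R : ℝ} (hA : 0 ≤ A) (hC : 0 ≤ C) (hD : 0 ≤ D)
    (hR : R ^ 2 ≤ A ^ 2 * C) (h₁ : C + D < 1)
    (h₂ : A * (1 + C) + 2 * R < (1 - C) ^ 2 - (1 - C) * D) (h₃ : -(A * C) ≤ R) {z : ℂ}
    (hz : charQuartic (A : ℂ) ↑(2 * C + D + 2 * R) C ↑(C * (C + D)) z = 0) : ‖z‖ < 1 := by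
  have hA₁ : A < 1 - C - D := by nlinarith
  have hB : 0 ≤ 2 * C + D + 2 * R := by nlinarith
  by_contra! hz₁
  have him := im_eq_zero_of_charQuartic_eq_zero hA (by linarith) hB hC (by positivity)
    (by nlinarith) (by linarith) hz₁ hz
  have hx : charQuartic A (2 * C + D + 2 * R) C (C * (C + D)) z.re = 0 := by
    rw [← Complex.re_add_im z, him, Complex.ofReal_zero, zero_mul, add_zero,
      ← ofReal_charQuartic] at hz
    exact_mod_cast hz
  rw [← Complex.abs_re_eq_norm.mpr him] at hz₁
  rcases le_abs'.mp hz₁ with hneg | hpos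
  · linarith [charQuartic_pos_of_le_neg_one hA hC hD hR h₁ hneg]
  · have hone : 0 < charQuartic A (2 * C + D + 2 * R) C (C * (C + D)) 1 := by
      simp only [charQuartic]; linarith
    linarith [charQuartic_pos_of_one_le (by linarith) hC (by linarith) (by nlinarith) hone hpos]

end

lemma sq_re_mul_conj_le (a c : ℂ) : (a ^ 2 * conj c).re ^ 2 ≤ (‖a‖ ^ 2) ^ 2 * ‖c‖ ^ 2 := by
  calc (a ^ 2 * conj c).re ^ 2 ≤ ‖a ^ 2 * conj c‖ ^ 2 := by
        rw [← sq_abs]; gcongr; exact Complex.abs_re_le_norm _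
    _ = (‖a‖ ^ 2) ^ 2 * ‖c‖ ^ 2 := by rw [norm_mul, norm_pow, Complex.norm_conj]; ring

/-- Asymptotic mean-square stability in the hereditary case (`b = 0`):
under the stated conditions all roots of the characteristic polynomial lie strictly
inside the unit disk. -/
theorem stmt_9 (a c d : ℂ)
    (h₁ : ‖c‖ ^ 2 + ‖d‖ ^ 2 < 1)
    (h₂ : ‖a‖ ^ 2 * (1 + ‖c‖ ^ 2) + 2 * (a ^ 2 * conj c).re
        < (1 - ‖c‖ ^ 2) ^ 2 - (1 - ‖c‖ ^ 2) * ‖d‖ ^ 2)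
    (h₃ : (a ^ 2 * conj c).re ≥ -(‖a‖ ^ 2 * ‖c‖ ^ 2))
    (p₁ p₂ p₃ p₄ : ℝ)
    (hp₁ : p₁ = -‖a‖ ^ 2)
    (hp₂ : p₂ = -2 * ‖c‖ ^ 2 - ‖d‖ ^ 2 - 2 * (a ^ 2 * conj c).re)
    (hp₃ : p₃ = -(‖a‖ ^ 2 * ‖c‖ ^ 2))
    (hp₄ : p₄ = ‖c‖ ^ 2 * (‖c‖ ^ 2 + ‖d‖ ^ 2)) :
    ∀ z : ℂ, z ^ 4 + (p₁ : ℂ) * z ^ 3 + (p₂ : ℂ) * z ^ 2 + (p₃ : ℂ) * z + (p₄ : ℂ) = 0 →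
      ‖z‖ < 1 := by
  intro z hz
  refine norm_lt_one_of_charQuartic_eq_zero (by positivity) (by positivity) (by positivity)
    (sq_re_mul_conj_le a c) h₁ h₂ h₃ ?_
  rw [← hz]
  subst hp₁ hp₂ hp₃ hp₄
  simp only [charQuartic]
  push_cast
  ring
end

section
/- Let x, y be complex numbers and set a = 1 + (3/2)x, b = y, c = −x/2. Assume: |c| < 1; |a|²(1+|c|²) + 2Re(a²·conj(c)) < (1−|c|²)²; |b|² < 1 − |c|² − |a|²(1+|c|²)/(1−|c|²) − 2Re(a²·conj(c))/(1−|c|²); and Re(a²·conj(c)) ≥ −|a|²|c|². Then Re(x) < 0 and |y|² < −2Re(x). In particular, with x = λh and y = μ√h for h > 0 and λ, μ ∈ ℂ, membership of (λ, μ) in the mean-square stability domain of the two-step Adams–Bashforth Maruyama (AB2) scheme implies Re(λ) + |μ|²/2 < 0. -/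
open ComplexConjugate

/-!
With `r = Re x` and `q = |x|²` the data reduce to `|c|² = q/4`, `|a|² = 1 + 3r + 9q/4` and
`Re(a² c̄) = -(r + 3q + 9qr/4)/2`. Multiplying the bound on `|b|²` by `1 - q/4 > 0` gives
`|b|² (1 - q/4) < E := -2r - q²/2 + 3rq/2`, and the last condition reads `H ≥ 0` with
`H := Re(a² c̄) + |a|²|c|²`. If `r ≥ 0`, then `E > 0` forces `4/3 < q`, and eliminating `r`
between `E > 0` and `H ≥ 0` leaves `q (q - 4) (21q - 20) > 0`, impossible for `4/3 < q < 4`.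
Once `r < 0`, `E ≤ -2r (1 - q/4)` yields `|b|² < -2r`.
-/

namespace AB2

lemma norm_neg_div_two_sq (x : ℂ) : ‖-x / 2‖ ^ 2 = ‖x‖ ^ 2 / 4 := by
  rw [norm_div, norm_neg, Complex.norm_two]
  ring

lemma norm_one_add_three_halves_mul_sq (x : ℂ) :
    ‖1 + (3 / 2 : ℂ) * x‖ ^ 2 = 1 + 3 * x.re + 9 / 4 * ‖x‖ ^ 2 := by
  simp only [Complex.sq_norm, Complex.normSq_apply, Complex.add_re, Complex.add_im,
    Complex.mul_re, Complex.mul_im, Complex.one_re, Complex.one_im]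
  norm_num
  ring

lemma re_one_add_three_halves_mul_sq_mul_conj_neg_div_two (x : ℂ) :
    ((1 + (3 / 2 : ℂ) * x) ^ 2 * conj (-x / 2)).re
      = -(x.re + 3 * ‖x‖ ^ 2 + 9 / 4 * ‖x‖ ^ 2 * x.re) / 2 := by
  set q : ℝ := ‖x‖ ^ 2 with hq
  have hx : x * conj x = q := by rw [Complex.mul_conj, hq, Complex.sq_norm]
  have : (1 + (3 / 2 : ℂ) * x) ^ 2 * conj (-x / 2) = -(conj x + 3 * q + 9 / 4 * q * x) / 2 := by
    rw [map_div₀, map_neg, ← hx, map_ofNat]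
    ring
  rw [this]
  simp

lemma stabilityBound_mul_eq {r q : ℝ} (hq : q ≠ 4) :
    (1 - q / 4 - (1 + 3 * r + 9 / 4 * q) * (1 + q / 4) / (1 - q / 4)
        - 2 * (-(r + 3 * q + 9 / 4 * q * r) / 2) / (1 - q / 4)) * (1 - q / 4)
      = -2 * r - q ^ 2 / 2 + 3 / 2 * r * q := by
  have : 1 - q / 4 ≠ 0 := fun h => hq (by linarith)
  field_simp
  ring

lemma neg_of_pos_of_nonneg {r q : ℝ} (hq : 0 ≤ q) (hq4 : q < 4)
    (hE : 0 < -2 * r - q ^ 2 / 2 + 3 / 2 * r * q)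
    (hH : 0 ≤ -r / 2 - 5 / 4 * q - 3 / 8 * q * r + 9 / 16 * q ^ 2) : r < 0 := by
  by_contra! hr
  have hq43 : 4 < 3 * q := by nlinarith
  nlinarith [mul_pos hE (by linarith : (0:ℝ) < 8 + 6 * q),
    mul_nonneg hH (by linarith : (0:ℝ) ≤ 3 * q - 4),
    mul_nonneg (mul_nonneg hq (by linarith : (0:ℝ) ≤ 4 - q)) (by linarith : (0:ℝ) ≤ 21 * q - 20)]

lemma neg_and_lt_of_stabilityBound {r q B : ℝ} (hq : 0 ≤ q) (hq4 : q < 4) (hB : 0 ≤ B)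
    (hbound : B < 1 - q / 4 - (1 + 3 * r + 9 / 4 * q) * (1 + q / 4) / (1 - q / 4)
        - 2 * (-(r + 3 * q + 9 / 4 * q * r) / 2) / (1 - q / 4))
    (hre : -(r + 3 * q + 9 / 4 * q * r) / 2 ≥ -((1 + 3 * r + 9 / 4 * q) * (q / 4))) :
    r < 0 ∧ B < -2 * r := by
  have hD : 0 < 1 - q / 4 := by linarith
  have hE : B * (1 - q / 4) < -2 * r - q ^ 2 / 2 + 3 / 2 * r * q := by
    rw [← stabilityBound_mul_eq hq4.ne]
    exact mul_lt_mul_of_pos_right hbound hD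
  have hr : r < 0 :=
    neg_of_pos_of_nonneg hq hq4 ((mul_nonneg hB hD.le).trans_lt hE) (by linarith)
  refine ⟨hr, lt_of_mul_lt_mul_right (hE.trans_le ?_) hD.le⟩
  nlinarith [mul_nonneg (neg_nonneg.mpr hr.le) hq]

lemma re_add_norm_sq_div_two_neg {lam mu : ℂ} {h : ℝ} (hh : 0 < h)
    (hy : ‖mu * Real.sqrt h‖ ^ 2 < -2 * (lam * h).re) : lam.re + ‖mu‖ ^ 2 / 2 < 0 := by
  rw [norm_mul, mul_pow, Complex.norm_real, Real.norm_eq_abs, sq_abs, Real.sq_sqrt hh.le,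
    Complex.re_mul_ofReal] at hy
  nlinarith

end AB2

open AB2 in
theorem stmt_11_general (x y : ℂ)
    (a b c : ℂ) (ha : a = 1 + (3 / 2 : ℂ) * x) (hb : b = y) (hc : c = -x / 2)
    (h₁ : ‖c‖ < 1)
    (h₃ : ‖b‖ ^ 2
        < 1 - ‖c‖ ^ 2
          - ‖a‖ ^ 2 * (1 + ‖c‖ ^ 2) / (1 - ‖c‖ ^ 2)
          - 2 * (a ^ 2 * conj c).re / (1 - ‖c‖ ^ 2))
    (h₄ : (a ^ 2 * conj c).re ≥ -(‖a‖ ^ 2 * ‖c‖ ^ 2)) :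
    x.re < 0 ∧ ‖y‖ ^ 2 < -2 * x.re ∧
      (∀ (lam mu : ℂ) (h : ℝ), 0 < h → x = lam * h → y = mu * Real.sqrt h →
        lam.re + ‖mu‖ ^ 2 / 2 < 0) := by
  subst ha hb hc
  have hq4 : ‖x‖ ^ 2 < 4 := by
    have := (norm_neg_div_two_sq x).symm.trans_lt (pow_lt_one₀ (norm_nonneg _) h₁ two_ne_zero)
    linarith
  rw [norm_neg_div_two_sq, norm_one_add_three_halves_mul_sq,
    re_one_add_three_halves_mul_sq_mul_conj_neg_div_two] at h₃ h₄
  obtain ⟨hr, hy⟩ := neg_and_lt_of_stabilityBound (by positivity) hq4 (by positivity) h₃ h₄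
  refine ⟨hr, hy, fun lam mu h hh hx hy' => re_add_norm_sq_div_two_neg hh ?_⟩
  rwa [← hx, ← hy']

/-- If `(x, y)` satisfies the asymptotic mean-square stability conditions of the AB2
scheme (with `a = 1 + (3/2)x`, `b = y`, `c = -x/2`), then `Re x < 0` and `|y|² < -2 Re x`.
In particular, with `x = λh`, `y = μ√h`, membership in the MS-stability domain of AB2
implies `Re λ + |μ|²/2 < 0`. -/
theorem stmt_11 (x y : ℂ)
    (a b c : ℂ) (ha : a = 1 + (3 / 2 : ℂ) * x) (hb : b = y) (hc : c = -x / 2)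
    (h₁ : ‖c‖ < 1)
    (h₂ : ‖a‖ ^ 2 * (1 + ‖c‖ ^ 2) + 2 * (a ^ 2 * conj c).re
        < (1 - ‖c‖ ^ 2) ^ 2)
    (h₃ : ‖b‖ ^ 2
        < 1 - ‖c‖ ^ 2
          - ‖a‖ ^ 2 * (1 + ‖c‖ ^ 2) / (1 - ‖c‖ ^ 2)
          - 2 * (a ^ 2 * conj c).re / (1 - ‖c‖ ^ 2))
    (h₄ : (a ^ 2 * conj c).re ≥ -(‖a‖ ^ 2 * ‖c‖ ^ 2)) :
    x.re < 0 ∧ ‖y‖ ^ 2 < -2 * x.re ∧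
      (∀ (lam mu : ℂ) (h : ℝ), 0 < h → x = lam * h → y = mu * Real.sqrt h →
        lam.re + ‖mu‖ ^ 2 / 2 < 0) :=
  stmt_11_general x y a b c ha hb hc h₁ h₃ h₄
end

section
/- Let λ, μ be real numbers and h > 0, and set a = 1 + (3/2)λh, b = μ√h, c = −λh/2. Then the conditions [0 ≤ c < 1, |a| < 1 − c, b²(1−c) < (1+c)((1−c)² − a²)] hold if and only if −1 < λh < 0 and μ² < 2λ(λh − 2)(λh + 1)/(λh + 2). -/
/-! Write x = λh, so a = 1 + 3x/2 and c = -x/2. The conditions 0 ≤ c and |a| < 1 - c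
say exactly -1 < x < 0. Since (1 + c)((1 - c)² - a²) = (1 + c)(1 - c - a)(1 - c + a)
= x(x - 2)(x + 1) and b² = μ²h, the last condition reads μ²h(x + 2) < 2x(x - 2)(x + 1),
and dividing by h(x + 2) > 0 gives the bound on μ². -/

lemma ab2_coeff_conditions_iff (x : ℝ) :
    (0 ≤ -x / 2 ∧ -x / 2 < 1 ∧ |1 + 3 / 2 * x| < 1 - -x / 2) ↔ (-1 < x ∧ x < 0) := by
  rw [abs_lt]
  constructor
  · rintro ⟨-, -, hlo, hhi⟩
    constructor <;> linarith
  · rintro ⟨hlo, hhi⟩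
    refine ⟨?_, ?_, ?_, ?_⟩ <;> linarith

lemma ab2_stability_margin_eq (x : ℝ) :
    (1 + -x / 2) * ((1 - -x / 2) ^ 2 - (1 + 3 / 2 * x) ^ 2) = x * (x - 2) * (x + 1) := by
  ring

lemma ab2_noise_bound_iff {lam mu h : ℝ} (hh : 0 < h) (hx : -2 < lam * h) :
    mu ^ 2 * h * (1 - -(lam * h) / 2) < lam * h * (lam * h - 2) * (lam * h + 1) ↔
      mu ^ 2 < 2 * lam * (lam * h - 2) * (lam * h + 1) / (lam * h + 2) := by
  have hlhs : mu ^ 2 * h * (1 - -(lam * h) / 2) = h * (mu ^ 2 * (lam * h + 2)) / 2 := by ring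
  have hrhs : lam * h * (lam * h - 2) * (lam * h + 1)
      = h * (2 * lam * (lam * h - 2) * (lam * h + 1)) / 2 := by ring
  rw [hlhs, hrhs, div_lt_div_iff_of_pos_right two_pos, mul_lt_mul_iff_right₀ hh,
    lt_div_iff₀ (by linarith)]

/-- The real-coefficient mean-square stability conditions of AB2 characterize the
stability region `R_AB2(h)`. -/
theorem stmt_13 (lam mu h : ℝ) (hh : 0 < h)
    (a b c : ℝ) (ha : a = 1 + (3 / 2) * lam * h) (hb : b = mu * Real.sqrt h)
    (hc : c = -(lam * h) / 2) :
    (0 ≤ c ∧ c < 1 ∧ |a| < 1 - c ∧ b ^ 2 * (1 - c) < (1 + c) * ((1 - c) ^ 2 - a ^ 2)) ↔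
      (-1 < lam * h ∧ lam * h < 0 ∧
        mu ^ 2 < 2 * lam * (lam * h - 2) * (lam * h + 1) / (lam * h + 2)) := by
  have ha' : a = 1 + 3 / 2 * (lam * h) := by rw [ha]; ring
  have hb2 : b ^ 2 = mu ^ 2 * h := by rw [hb, mul_pow, Real.sq_sqrt hh.le]
  rw [hb2, hc, ha', ab2_stability_margin_eq]
  constructor
  · rintro ⟨hc0, hc1, ha1, hnoise⟩
    obtain ⟨hlo, hhi⟩ := (ab2_coeff_conditions_iff _).1 ⟨hc0, hc1, ha1⟩
    exact ⟨hlo, hhi, (ab2_noise_bound_iff hh (by linarith)).1 hnoise⟩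
  · rintro ⟨hlo, hhi, hmu⟩
    obtain ⟨hc0, hc1, ha1⟩ := (ab2_coeff_conditions_iff _).2 ⟨hlo, hhi⟩
    exact ⟨hc0, hc1, ha1, (ab2_noise_bound_iff hh (by linarith)).2 hmu⟩
end

section
/- Let λ, μ be real numbers and h > 0. If −1 < λh < 0 and μ² < 2λ(λh − 2)(λh + 1)/(λh + 2), then λ + μ²/2 < 0. In other words, the mean-square stability region R_AB2(h) of the two-step Adams–Bashforth Maruyama scheme is contained in the mean-square stability region R_SDE = {(λ, μ) ∈ ℝ² : λ + μ²/2 < 0} of the test equation, for every step size h > 0. -/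
/-!
With `x = λh ∈ (-1, 0)` the AB2 bound reads `μ² < 2λ·g(x)` for
`g(x) = (x - 2)(x + 1)/(x + 2)`. Since `g < 0` on `(-1, 2)`, positivity of `μ²` forces `λ < 0`;
and `g(x) + 1 = x²/(x + 2) ≥ 0`, so `2λ·g(x) ≤ -2λ`, which is the claim `μ² < -2λ`.
-/

noncomputable def ab2Factor (x : ℝ) : ℝ := (x - 2) * (x + 1) / (x + 2)

lemma ab2Factor_add_one {x : ℝ} (hx : x + 2 ≠ 0) : ab2Factor x + 1 = x ^ 2 / (x + 2) := by
  unfold ab2Factor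
  field_simp
  ring

lemma neg_one_le_ab2Factor {x : ℝ} (hx : -2 < x) : -1 ≤ ab2Factor x := by
  have hpos : 0 < x + 2 := by linarith
  have := ab2Factor_add_one hpos.ne'
  have : 0 ≤ x ^ 2 / (x + 2) := by positivity
  linarith

lemma ab2Factor_neg {x : ℝ} (h₁ : -1 < x) (h₂ : x < 2) : ab2Factor x < 0 :=
  div_neg_of_neg_of_pos (mul_neg_of_neg_of_pos (by linarith) (by linarith)) (by linarith)

theorem stmt_14_general (lam mu h : ℝ)
    (h₁ : -1 < lam * h) (h₂ : lam * h < 0)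
    (h₃ : mu ^ 2 < 2 * lam * (lam * h - 2) * (lam * h + 1) / (lam * h + 2)) :
    lam + mu ^ 2 / 2 < 0 := by
  have hbound : mu ^ 2 < 2 * lam * ab2Factor (lam * h) := by
    rwa [ab2Factor, ← mul_div_assoc, ← mul_assoc]
  have hg := ab2Factor_neg h₁ (by linarith)
  have hlam : lam < 0 := by nlinarith [sq_nonneg mu]
  have hg_ge := neg_one_le_ab2Factor (x := lam * h) (by linarith)
  nlinarith

/-- The mean-square stability region of AB2 is contained in that of the test equation:
`R_AB2(h) ⊆ R_SDE` for every `h > 0`. -/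
theorem stmt_14 (lam mu h : ℝ) (hh : 0 < h)
    (h₁ : -1 < lam * h) (h₂ : lam * h < 0)
    (h₃ : mu ^ 2 < 2 * lam * (lam * h - 2) * (lam * h + 1) / (lam * h + 2)) :
    lam + mu ^ 2 / 2 < 0 :=
  stmt_14_general lam mu h h₁ h₂ h₃
end

section
/- Let λ, μ be real numbers with λ + μ²/2 < 0 (so in particular λ < 0), and define h₀ = min( −1/λ , (μ² + 2λ + √((μ² + 2λ)(μ² + 18λ)))/(4λ²) ). Then for every h with 0 < h < h₀ one has −1 < λh < 0 and μ² < 2λ(λh − 2)(λh + 1)/(λh + 2); note that (μ² + 2λ)(μ² + 18λ) > 0 since both factors are negative. -/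
/-- Conditional mean-square stability of AB2: if `(λ, μ)` lies in the stability region
of the test equation, then for every step size `h < h₀` the pair lies in `R_AB2(h)`. -/
theorem stmt_15 (lam mu : ℝ) (hstab : lam + mu ^ 2 / 2 < 0)
    (h₀ : ℝ)
    (hh₀ : h₀ = min (-1 / lam)
        ((mu ^ 2 + 2 * lam + Real.sqrt ((mu ^ 2 + 2 * lam) * (mu ^ 2 + 18 * lam)))
          / (4 * lam ^ 2))) :
    (mu ^ 2 + 2 * lam) * (mu ^ 2 + 18 * lam) > 0 ∧
      ∀ h : ℝ, 0 < h → h < h₀ →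
        (-1 < lam * h ∧ lam * h < 0 ∧
          mu ^ 2 < 2 * lam * (lam * h - 2) * (lam * h + 1) / (lam * h + 2)) := by
  have hmu2 : (0:ℝ) ≤ mu ^ 2 := sq_nonneg mu
  have hlam : lam < 0 := by linarith
  have hb : mu ^ 2 + 2 * lam < 0 := by linarith
  have h18 : mu ^ 2 + 18 * lam < 0 := by linarith
  have hD : (mu ^ 2 + 2 * lam) * (mu ^ 2 + 18 * lam) > 0 := mul_pos_of_neg_of_neg hb h18
  refine ⟨hD, fun h hpos hlt => ?_⟩
  have h1 : h < -1 / lam := lt_of_lt_of_le hlt (hh₀ ▸ min_le_left _ _)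
  have h2 : h < (mu ^ 2 + 2 * lam + Real.sqrt ((mu ^ 2 + 2 * lam) * (mu ^ 2 + 18 * lam)))
      / (4 * lam ^ 2) := lt_of_lt_of_le hlt (hh₀ ▸ min_le_right _ _)
  have hx1 : -1 < lam * h := by
    have := (lt_div_iff_of_neg hlam).mp h1
    linarith [mul_comm lam h]
  have hx0 : lam * h < 0 := mul_neg_of_neg_of_pos hlam hpos
  refine ⟨hx1, hx0, ?_⟩
  set sD := Real.sqrt ((mu ^ 2 + 2 * lam) * (mu ^ 2 + 18 * lam)) with hsDdef
  have hsD : sD ^ 2 = (mu ^ 2 + 2 * lam) * (mu ^ 2 + 18 * lam) := Real.sq_sqrt hD.le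
  have h4l : (0:ℝ) < 4 * lam ^ 2 := by nlinarith
  have h2' : 4 * lam ^ 2 * h < mu ^ 2 + 2 * lam + sD := by
    have := (lt_div_iff₀ h4l).mp h2
    linarith
  have hrhs : 0 < 4 * lam ^ 2 * h - (mu ^ 2 + 2 * lam) := by nlinarith
  have hlt' : 4 * lam ^ 2 * h - (mu ^ 2 + 2 * lam) < sD := by linarith
  have hkey : (4 * lam ^ 2 * h - (mu ^ 2 + 2 * lam)) ^ 2
      < (mu ^ 2 + 2 * lam) * (mu ^ 2 + 18 * lam) := by
    calc (4 * lam ^ 2 * h - (mu ^ 2 + 2 * lam)) ^ 2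
        < sD ^ 2 := by
          apply pow_lt_pow_left₀ hlt' hrhs.le
          norm_num
      _ = _ := hsD
  have e : (-8 * lam) * (2 * lam ^ 3 * h ^ 2 - (mu ^ 2 + 2 * lam) * (lam * h + 2))
      = (mu ^ 2 + 2 * lam) * (mu ^ 2 + 18 * lam)
        - (4 * lam ^ 2 * h - (mu ^ 2 + 2 * lam)) ^ 2 := by ring
  have hmulpos : 0 < (-8 * lam) * (2 * lam ^ 3 * h ^ 2 - (mu ^ 2 + 2 * lam) * (lam * h + 2)) := by
    rw [e]; linarith
  have h8 : (0:ℝ) < -8 * lam := by linarith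
  have key' : (mu ^ 2 + 2 * lam) * (lam * h + 2) < 2 * lam ^ 3 * h ^ 2 := by
    nlinarith [hmulpos, h8]
  have hden : 0 < lam * h + 2 := by linarith
  rw [lt_div_iff₀ hden]
  nlinarith [key']
end

section
/- Let λ, μ be real numbers and h > 0 with λh < 12/5, and set x = λh, a = (12 + 8x)/(12 − 5x), b = 12μ√h/(12 − 5x), c = −x/(12 − 5x). Then the conditions [0 ≤ c < 1, |a| < 1 − c, b²(1−c) < (1+c)((1−c)² − a²)] hold if and only if −6 < λh < 0 and μ² < λ(λh − 2)(λh + 6)/(2(3 − λh)). -/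
/-!
Writing `D = 12 - 5x > 0`, the coefficients are `a = (12 + 8x)/D`, `b = B/D`, `c = -x/D` with
`B = 12μ√h`. The stability conditions are homogeneous in `(a, b, c, 1)`, so they can be stated for
the numerators and `D` instead, where they become polynomial: `0 ≤ c` is `x ≤ 0`, `|a| < 1 - c`
is `-6 < x < 0`, and the last condition is `B²(3 - x) < 72 x (x - 2)(x + 6)`, which after
`B² = 144 μ² h` and division by `72 h` is the bound on `μ²`.
-/

/-- The mean-square stability conditions for `Xᵢ = a Xᵢ₋₁ + c Xᵢ₋₂ + b Xᵢ₋₁ ξᵢ₋₁`. -/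
def MSStable (a b c : ℝ) : Prop :=
  0 ≤ c ∧ c < 1 ∧ |a| < 1 - c ∧ b ^ 2 * (1 - c) < (1 + c) * ((1 - c) ^ 2 - a ^ 2)

theorem msStable_div_iff {A B C D : ℝ} (hD : 0 < D) :
    MSStable (A / D) (B / D) (C / D) ↔
      0 ≤ C ∧ C < D ∧ |A| < D - C ∧ B ^ 2 * (D - C) < (D + C) * ((D - C) ^ 2 - A ^ 2) := by
  have hsub : 1 - C / D = (D - C) / D := by field_simp
  have hlhs : (B / D) ^ 2 * (1 - C / D) = B ^ 2 * (D - C) / D ^ 3 := by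
    field_simp
  have hrhs : (1 + C / D) * ((1 - C / D) ^ 2 - (A / D) ^ 2) =
      (D + C) * ((D - C) ^ 2 - A ^ 2) / D ^ 3 := by
    field_simp
  rw [MSStable, hlhs, hrhs, hsub, abs_div, abs_of_pos hD, div_lt_div_iff_of_pos_right hD,
    div_lt_div_iff_of_pos_right (pow_pos hD 3), div_lt_one hD, le_div_iff₀ hD, zero_mul]

theorem msStable_am2_iff {x B : ℝ} (hx : x < 12 / 5) :
    MSStable ((12 + 8 * x) / (12 - 5 * x)) (B / (12 - 5 * x)) (-x / (12 - 5 * x)) ↔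
      -6 < x ∧ x < 0 ∧ B ^ 2 * (3 - x) < 72 * x * (x - 2) * (x + 6) := by
  rw [msStable_div_iff (by linarith), abs_lt]
  constructor
  · rintro ⟨-, -, ⟨hlo, hhi⟩, hquad⟩
    exact ⟨by linarith, by linarith, by linarith⟩
  · rintro ⟨hlo, hhi, hquad⟩
    exact ⟨by linarith, by linarith, ⟨by linarith, by linarith⟩, by linarith⟩

/-- The real-coefficient mean-square stability conditions of AM2 characterize the
stability region `R_AM2(h)`. -/
theorem stmt_16 (lam mu h : ℝ) (hh : 0 < h) (hx : lam * h < 12 / 5)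
    (x a b c : ℝ) (hxdef : x = lam * h)
    (ha : a = (12 + 8 * x) / (12 - 5 * x))
    (hb : b = 12 * mu * Real.sqrt h / (12 - 5 * x))
    (hc : c = -x / (12 - 5 * x)) :
    (0 ≤ c ∧ c < 1 ∧ |a| < 1 - c ∧ b ^ 2 * (1 - c) < (1 + c) * ((1 - c) ^ 2 - a ^ 2)) ↔
      (-6 < lam * h ∧ lam * h < 0 ∧
        mu ^ 2 < lam * (lam * h - 2) * (lam * h + 6) / (2 * (3 - lam * h))) := by
  subst hxdef ha hb hc
  change MSStable _ _ _ ↔ _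
  rw [msStable_am2_iff hx, mul_pow, mul_pow, Real.sq_sqrt hh.le,
    lt_div_iff₀ (by linarith : (0 : ℝ) < 2 * (3 - lam * h))]
  rw [show 12 ^ 2 * mu ^ 2 * h * (3 - lam * h) = 72 * h * (mu ^ 2 * (2 * (3 - lam * h))) by ring,
    show 72 * (lam * h) * (lam * h - 2) * (lam * h + 6) =
      72 * h * (lam * (lam * h - 2) * (lam * h + 6)) by ring,
    mul_lt_mul_iff_of_pos_left (by positivity)]
end

section
/- Let λ, μ be real numbers and h > 0. If −6 < λh < 0 and μ² < λ(λh − 2)(λh + 6)/(2(3 − λh)), then λ + μ²/2 < 0. In other words, the mean-square stability region R_AM2(h) of the two-step Adams–Moulton Maruyama scheme is contained in the mean-square stability region R_SDE = {(λ, μ) ∈ ℝ² : λ + μ²/2 < 0} of the test equation, for every step size h > 0. -/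
/-- The mean-square stability region of AM2 is contained in that of the test equation:
`R_AM2(h) ⊆ R_SDE` for every `h > 0`. -/
theorem stmt_17 (lam mu h : ℝ) (hh : 0 < h)
    (h₁ : -6 < lam * h) (h₂ : lam * h < 0)
    (h₃ : mu ^ 2 < lam * (lam * h - 2) * (lam * h + 6) / (2 * (3 - lam * h))) :
    lam + mu ^ 2 / 2 < 0 := by
  have hd : 0 < 2 * (3 - lam * h) := by linarith
  rw [lt_div_iff₀ hd] at h₃
  have hlam : lam < 0 := by
    rcases lt_trichotomy lam 0 with h | h | h
    · exact h
    · simp [h] at h₂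
    · nlinarith
  nlinarith [mul_nonneg (neg_pos.mpr hlam).le (sq_nonneg (lam * h))]
end

section
/- Let λ, μ be real numbers with λ + μ²/2 < 0 (so in particular λ < 0), and define h₀ = min( −6/λ , (−μ² − 2λ + √((μ² + 2λ)(μ² + 8λ)))/λ² ). Then for every h with 0 < h < h₀ one has −6 < λh < 0 and μ² < λ(λh − 2)(λh + 6)/(2(3 − λh)); note that (μ² + 2λ)(μ² + 8λ) > 0 since both factors are negative. -/
/-- Conditional mean-square stability of AM2: if `(λ, μ)` lies in the stability region
of the test equation, then for every step size `h < h₀` the pair lies in `R_AM2(h)`. -/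
theorem stmt_18 (lam mu : ℝ) (hstab : lam + mu ^ 2 / 2 < 0)
    (h₀ : ℝ)
    (hh₀ : h₀ = min (-6 / lam)
        ((-mu ^ 2 - 2 * lam + Real.sqrt ((mu ^ 2 + 2 * lam) * (mu ^ 2 + 8 * lam)))
          / lam ^ 2)) :
    (mu ^ 2 + 2 * lam) * (mu ^ 2 + 8 * lam) > 0 ∧
      ∀ h : ℝ, 0 < h → h < h₀ →
        (-6 < lam * h ∧ lam * h < 0 ∧
          mu ^ 2 < lam * (lam * h - 2) * (lam * h + 6) / (2 * (3 - lam * h))) := by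
  have hlam : lam < 0 := by nlinarith [sq_nonneg mu]
  have h2 : mu ^ 2 + 2 * lam < 0 := by nlinarith
  have h8 : mu ^ 2 + 8 * lam < 0 := by nlinarith
  have hP : (mu ^ 2 + 2 * lam) * (mu ^ 2 + 8 * lam) > 0 := mul_pos_of_neg_of_neg h2 h8
  refine ⟨hP, ?_⟩
  intro h hh hhlt
  set s := Real.sqrt ((mu ^ 2 + 2 * lam) * (mu ^ 2 + 8 * lam)) with hs
  have hs0 : 0 ≤ s := Real.sqrt_nonneg _
  have hs2 : s ^ 2 = (mu ^ 2 + 2 * lam) * (mu ^ 2 + 8 * lam) := Real.sq_sqrt hP.le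
  have hlamsq : (0:ℝ) < lam ^ 2 := by nlinarith
  rw [hh₀, lt_min_iff] at hhlt
  obtain ⟨hlt1, hlt2⟩ := hhlt
  -- h < -6/lam gives lam*h > -6
  have hA : -6 < lam * h := by
    rw [lt_div_iff_of_neg hlam] at hlt1
    nlinarith
  have hB : lam * h < 0 := mul_neg_of_neg_of_pos hlam hh
  refine ⟨hA, hB, ?_⟩
  have hden : (0:ℝ) < 2 * (3 - lam * h) := by nlinarith
  rw [lt_div_iff₀ hden]
  -- factor 1: lam^2*h + mu^2 + 2*lam - s < 0
  have hf1 : lam ^ 2 * h + mu ^ 2 + 2 * lam - s < 0 := by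
    rw [lt_div_iff₀ hlamsq] at hlt2
    nlinarith
  -- s > -(mu^2 + 2*lam)
  have hsgt : -(mu ^ 2 + 2 * lam) < s := by nlinarith
  -- factor 2: lam^2*h + mu^2 + 2*lam + s > 0
  have hf2 : 0 < lam ^ 2 * h + mu ^ 2 + 2 * lam + s := by nlinarith
  nlinarith [mul_pos (neg_pos.mpr hf1) hf2, mul_pos hf2 (neg_pos.mpr hf1),
    mul_pos (mul_pos (neg_pos.mpr hf1) hf2) (neg_pos.mpr hlam)]
end

section
/- Let λ, μ be complex numbers with μ ≠ 0 and Re(λ) + |μ|²/2 < 0 (so Re(λ) < 0), and define h₀ = min( 1/|λ| , |μ|²/(2|λ|²) , √( 4(−2Re(λ) − |μ|²) / (−6Re(λ)·|λ|²) ) ). Then for every h with 0 < h < h₀, setting x = λh, y = μ√h, a = 1 + (3/2)x, b = y, c = −x/2, the following hold: |c| < 1; |a|²(1+|c|²) + 2Re(a²·conj(c)) < (1−|c|²)²; and |b|² < 1 − |c|² − |a|²(1+|c|²)/(1−|c|²) − 2Re(a²·conj(c))/(1−|c|²). -/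
open ComplexConjugate

/-!
For `x = λh` the AB2 coefficients give the identity
`(1 - |c|²)² - |a|²(1 + |c|²) - 2 Re(a² c̄) = -2 Re x + (3/2) Re x |x|² - |x|⁴/2`,
so all three conditions reduce to
`|μ|² h (1 - |λ|²h²/4) < -2 Re λ h + (3/2) Re λ |λ|² h³ - |λ|⁴ h⁴/2`.
Dividing by `h`, the bound `h < √(…)` gives `|μ|² < -2 Re λ + (3/2) Re λ |λ|² h²`,
and `h < |μ|²/(2|λ|²)` lets `|μ|² |λ|² h²/4` absorb the quartic term.
-/

/-- The asymptotic mean-square stability conditions of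
`X i = a X (i-1) + c X (i-2) + b X (i-1) ξ (i-1)`. -/
def MeanSquareStable (a b c : ℂ) : Prop :=
  ‖c‖ < 1 ∧
  ‖a‖ ^ 2 * (1 + ‖c‖ ^ 2) + 2 * (a ^ 2 * conj c).re < (1 - ‖c‖ ^ 2) ^ 2 ∧
  ‖b‖ ^ 2 < 1 - ‖c‖ ^ 2 - ‖a‖ ^ 2 * (1 + ‖c‖ ^ 2) / (1 - ‖c‖ ^ 2)
    - 2 * (a ^ 2 * conj c).re / (1 - ‖c‖ ^ 2)

theorem meanSquareStable_of_lt {a b c : ℂ} (hc : ‖c‖ < 1)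
    (h : ‖b‖ ^ 2 * (1 - ‖c‖ ^ 2)
      < (1 - ‖c‖ ^ 2) ^ 2 - ‖a‖ ^ 2 * (1 + ‖c‖ ^ 2) - 2 * (a ^ 2 * conj c).re) :
    MeanSquareStable a b c := by
  have hD : 0 < 1 - ‖c‖ ^ 2 := by nlinarith [norm_nonneg c]
  have hb : 0 ≤ ‖b‖ ^ 2 * (1 - ‖c‖ ^ 2) := by positivity
  refine ⟨hc, by linarith, ?_⟩
  rw [← lt_div_iff₀ hD] at h
  rwa [sub_div, sub_div, sq (1 - ‖c‖ ^ 2), mul_div_cancel_right₀ _ hD.ne'] at h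

section AB2

variable (x : ℂ)

theorem norm_neg_div_two_sq : ‖-x / 2‖ ^ 2 = ‖x‖ ^ 2 / 4 := by
  rw [norm_div, norm_neg, Complex.norm_ofNat]
  ring

theorem norm_one_add_three_halves_mul_sq :
    ‖1 + (3 / 2 : ℂ) * x‖ ^ 2 = 1 + 3 * x.re + 9 / 4 * ‖x‖ ^ 2 := by
  rw [Complex.sq_norm, Complex.sq_norm, Complex.normSq_apply, Complex.normSq_apply]
  simp
  ring

theorem re_one_add_three_halves_mul_sq_mul_conj :
    ((1 + (3 / 2 : ℂ) * x) ^ 2 * conj (-x / 2)).re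
      = -(x.re + 3 * ‖x‖ ^ 2 + 9 / 4 * ‖x‖ ^ 2 * x.re) / 2 := by
  rw [Complex.sq_norm, Complex.normSq_apply, map_div₀, map_neg, Complex.conj_ofNat]
  simp [pow_two]
  ring

theorem ab2_stabilityMargin_eq :
    (1 - ‖-x / 2‖ ^ 2) ^ 2 - ‖1 + (3 / 2 : ℂ) * x‖ ^ 2 * (1 + ‖-x / 2‖ ^ 2)
        - 2 * ((1 + (3 / 2 : ℂ) * x) ^ 2 * conj (-x / 2)).re
      = -2 * x.re + 3 / 2 * x.re * ‖x‖ ^ 2 - ‖x‖ ^ 4 / 2 := by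
  rw [norm_neg_div_two_sq, norm_one_add_three_halves_mul_sq,
    re_one_add_three_halves_mul_sq_mul_conj]
  ring

theorem meanSquareStable_ab2 {b : ℂ} (hx : ‖x‖ < 2)
    (h : ‖b‖ ^ 2 * (1 - ‖x‖ ^ 2 / 4)
      < -2 * x.re + 3 / 2 * x.re * ‖x‖ ^ 2 - ‖x‖ ^ 4 / 2) :
    MeanSquareStable (1 + (3 / 2 : ℂ) * x) b (-x / 2) := by
  refine meanSquareStable_of_lt ?_ ?_
  · rw [norm_div, norm_neg, Complex.norm_ofNat]
    linarith
  · rwa [ab2_stabilityMargin_eq, norm_neg_div_two_sq]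

end AB2

theorem ab2_noise_lt_margin {R S m h : ℝ} (hh : 0 < h) (hS : 0 ≤ S) (hm : 2 * S * h ≤ m)
    (hR : 6 * (-R) * S * h ^ 2 < 4 * (-2 * R - m)) :
    m * h * (1 - S * h ^ 2 / 4)
      < -2 * (R * h) + 3 / 2 * (R * h) * (S * h ^ 2) - (S * h ^ 2) ^ 2 / 2 := by
  nlinarith [mul_lt_mul_of_pos_right hR hh,
    mul_le_mul_of_nonneg_left hm (by positivity : 0 ≤ S * h ^ 3)]

theorem stmt_19_general (lam mu : ℂ)
    (hstab : lam.re + ‖mu‖ ^ 2 / 2 < 0)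
    (h₀ : ℝ)
    (hh₀ : h₀ = min (1 / ‖lam‖)
        (min (‖mu‖ ^ 2 / (2 * ‖lam‖ ^ 2))
          (Real.sqrt (4 * (-2 * lam.re - ‖mu‖ ^ 2)
            / (-6 * lam.re * ‖lam‖ ^ 2))))) :
    ∀ h : ℝ, 0 < h → h < h₀ →
      ∀ x y a b c : ℂ, x = lam * (h : ℂ) → y = mu * (Real.sqrt h : ℂ) →
        a = 1 + (3 / 2 : ℂ) * x → b = y → c = -x / 2 →
        (‖c‖ < 1 ∧
         ‖a‖ ^ 2 * (1 + ‖c‖ ^ 2) + 2 * (a ^ 2 * conj c).re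
           < (1 - ‖c‖ ^ 2) ^ 2 ∧
         ‖b‖ ^ 2
           < 1 - ‖c‖ ^ 2
             - ‖a‖ ^ 2 * (1 + ‖c‖ ^ 2) / (1 - ‖c‖ ^ 2)
             - 2 * (a ^ 2 * conj c).re / (1 - ‖c‖ ^ 2)) := by
  rintro h hh hh_lt x y a b c rfl rfl rfl rfl rfl
  have hre : lam.re < 0 := by linarith [sq_nonneg ‖mu‖]
  have hlam : 0 < ‖lam‖ := norm_pos_iff.mpr fun h0 ↦ by simp [h0] at hre
  rw [hh₀, lt_min_iff, lt_min_iff, lt_div_iff₀ hlam, lt_div_iff₀ (by positivity),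
    Real.lt_sqrt hh.le, lt_div_iff₀ (mul_pos (by linarith) (by positivity))] at hh_lt
  obtain ⟨hx, hm, hR⟩ := hh_lt
  have hnx : ‖lam * h‖ = ‖lam‖ * h := by
    rw [norm_mul, Complex.norm_real, Real.norm_of_nonneg hh.le]
  have hnb : ‖mu * (Real.sqrt h : ℂ)‖ ^ 2 = ‖mu‖ ^ 2 * h := by
    rw [norm_mul, Complex.norm_real, Real.norm_of_nonneg (Real.sqrt_nonneg h), mul_pow,
      Real.sq_sqrt hh.le]
  refine meanSquareStable_ab2 _ (by rw [hnx]; linarith) ?_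
  rw [hnx, hnb, Complex.re_mul_ofReal]
  convert ab2_noise_lt_margin (R := lam.re) (m := ‖mu‖ ^ 2) hh (sq_nonneg ‖lam‖)
    (by linarith) (by linarith) using 1 <;> ring

/-- Conditional mean-square stability of AB2 for the complex scalar test equation:
if `Re λ + |μ|²/2 < 0` and `0 < h < h₀`, then the AB2 coefficients satisfy the
asymptotic mean-square stability conditions. -/
theorem stmt_19 (lam mu : ℂ) (hmu : mu ≠ 0)
    (hstab : lam.re + ‖mu‖ ^ 2 / 2 < 0)
    (h₀ : ℝ)
    (hh₀ : h₀ = min (1 / ‖lam‖)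
        (min (‖mu‖ ^ 2 / (2 * ‖lam‖ ^ 2))
          (Real.sqrt (4 * (-2 * lam.re - ‖mu‖ ^ 2)
            / (-6 * lam.re * ‖lam‖ ^ 2))))) :
    ∀ h : ℝ, 0 < h → h < h₀ →
      ∀ x y a b c : ℂ, x = lam * (h : ℂ) → y = mu * (Real.sqrt h : ℂ) →
        a = 1 + (3 / 2 : ℂ) * x → b = y → c = -x / 2 →
        (‖c‖ < 1 ∧
         ‖a‖ ^ 2 * (1 + ‖c‖ ^ 2) + 2 * (a ^ 2 * conj c).re
           < (1 - ‖c‖ ^ 2) ^ 2 ∧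
         ‖b‖ ^ 2
           < 1 - ‖c‖ ^ 2
             - ‖a‖ ^ 2 * (1 + ‖c‖ ^ 2) / (1 - ‖c‖ ^ 2)
             - 2 * (a ^ 2 * conj c).re / (1 - ‖c‖ ^ 2)) :=
  stmt_19_general lam mu hstab h₀ hh₀
end
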